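/- Let (u*, λ*) be an eigenpair with u* > 0 entrywise, ‖u*‖ = 1, and 𝒜(u*)u* = λ* u*. Then there exist constants ε > 0 and d > 0 such that for every u ∈ ℝ^n with u > 0 entrywise, ‖u‖ = 1, and ‖u − u*‖ + |λ(u) − λ*| < ε, the following holds: letting (Δ, δ) solve the Newton system at (u, λ(u)) and setting u' = (u + Δ)/‖u + Δ‖ (a full step with θ = 1), one has u' > 0 entrywise, ‖u' − u*‖ ≤ d·‖u − u*‖², and ‖u' − u*‖ + |λ(u') − λ*| ≤ d·(‖u − u*‖ + |λ(u) − λ*|)². -/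

import Mathlib

open Matrix Finset

noncomputable def eucNorm {n : ℕ} (u : Fin n → ℝ) : ℝ := Real.sqrt (∑ i, u i ^ 2)

def IsZMatrix {n : ℕ} (B : Matrix (Fin n) (Fin n) ℝ) : Prop :=
  ∀ i j, i ≠ j → B i j ≤ 0

def IsIrreducibleMat {n : ℕ} (B : Matrix (Fin n) (Fin n) ℝ) : Prop :=
  ¬ ∃ S : Finset (Fin n), S.Nonempty ∧ S ≠ Finset.univ ∧
    ∀ i ∈ S, ∀ j ∉ S, B i j = 0

def IsNonsingularM {n : ℕ} (B : Matrix (Fin n) (Fin n) ℝ) : Prop :=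
  IsZMatrix B ∧ IsUnit B ∧ ∀ i j, 0 ≤ B⁻¹ i j

noncomputable def calA {n : ℕ} (A : Matrix (Fin n) (Fin n) ℝ) (Γ : ℝ) (a : Fin n → ℝ)
    (u : Fin n → ℝ) : Matrix (Fin n) (Fin n) ℝ :=
  A + Γ • Matrix.diagonal (fun i => 1 - 1 / (a i + u i ^ 2))

noncomputable def rvec {n : ℕ} (A : Matrix (Fin n) (Fin n) ℝ) (Γ : ℝ) (a : Fin n → ℝ)
    (u : Fin n → ℝ) (lam : ℝ) : Fin n → ℝ :=
  calA A Γ a u *ᵥ u - lam • u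

noncomputable def Jmat {n : ℕ} (A : Matrix (Fin n) (Fin n) ℝ) (Γ : ℝ) (a : Fin n → ℝ)
    (u : Fin n → ℝ) (lam : ℝ) : Matrix (Fin n) (Fin n) ℝ :=
  A + (Γ - lam) • (1 : Matrix (Fin n) (Fin n) ℝ)
    - Γ • Matrix.diagonal (fun i => (a i - u i ^ 2) / (a i + u i ^ 2) ^ 2)

noncomputable def lamOf {n : ℕ} [NeZero n] (A : Matrix (Fin n) (Fin n) ℝ) (Γ : ℝ)
    (a : Fin n → ℝ) (u : Fin n → ℝ) : ℝ :=
  ⨅ i, (calA A Γ a u *ᵥ u) i / u i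

def NewtonSystem {n : ℕ} (A : Matrix (Fin n) (Fin n) ℝ) (Γ : ℝ) (a : Fin n → ℝ)
    (u : Fin n → ℝ) (lam : ℝ) (Δ : Fin n → ℝ) (δ : ℝ) : Prop :=
  Jmat A Γ a u lam *ᵥ Δ - δ • u = -rvec A Γ a u lam ∧
  -(u ⬝ᵥ Δ) = -(1/2 * (u ⬝ᵥ u - 1))

/-!
The eigenpair `(u*, λ*)` is a zero of `F(u, λ) = (𝒜(u)u - λu, -(uᵀu - 1)/2)`, whose derivative is
the bordered matrix `[[J(u, λ), -u], [-uᵀ, 0]]`. At the eigenpair, `J(u*, λ*)` is a Z-matrix with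
`J(u*, λ*) u* = 2Γ u*³/(a + u*²)² > 0`, hence monotone (`J v ≥ 0 → v ≥ 0`), and monotonicity
together with `u* > 0` makes the bordered matrix injective. Newton's method for a `C²` map whose
derivative at a zero is injective converges quadratically, so the full step from `(u, λ(u))` lands
within `C ‖(u, λ(u)) - (u*, λ*)‖²` of the eigenpair. Normalizing at most doubles the distance to the
unit vector `u*` and preserves positivity near `u* > 0`. Finally `λ(·)`, a minimum of `C¹` ratios
that all equal `λ*` at `u*`, is Lipschitz near `u*`, so `‖u - u*‖ + |λ(u) - λ*|` and `‖u - u*‖` are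
comparable.
-/

open Filter Metric Topology NNReal

section EuclideanNorm
variable {n : ℕ}

lemma eucNorm_eq_norm_toLp (u : Fin n → ℝ) : eucNorm u = ‖WithLp.toLp 2 u‖ := by
  simp [eucNorm, EuclideanSpace.norm_eq, Real.norm_eq_abs, sq_abs]

lemma eucNorm_nonneg (u : Fin n → ℝ) : 0 ≤ eucNorm u := Real.sqrt_nonneg _

lemma norm_le_eucNorm (u : Fin n → ℝ) : ‖u‖ ≤ eucNorm u := by
  rw [eucNorm_eq_norm_toLp]
  refine (pi_norm_le_iff_of_nonneg (norm_nonneg _)).2 fun i => ?_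
  exact PiLp.norm_apply_le (WithLp.toLp 2 u) i

lemma eucNorm_le_sqrt_mul_norm (u : Fin n → ℝ) : eucNorm u ≤ √n * ‖u‖ := by
  rw [← Real.sqrt_sq (norm_nonneg u), ← Real.sqrt_mul (Nat.cast_nonneg n)]
  refine Real.sqrt_le_sqrt ?_
  calc ∑ i, u i ^ 2 ≤ ∑ _i : Fin n, ‖u‖ ^ 2 := Finset.sum_le_sum fun i _ => by
        simpa [Real.norm_eq_abs, sq_abs] using
          pow_le_pow_left₀ (norm_nonneg _) (norm_le_pi_norm u i) 2
    _ = n * ‖u‖ ^ 2 := by simp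

lemma eucNorm_pos {u : Fin n → ℝ} (hu : u ≠ 0) : 0 < eucNorm u := by
  rw [eucNorm_eq_norm_toLp]
  exact norm_pos_iff.2 (by simpa using hu)

lemma dotProduct_self_eq_eucNorm_sq (u : Fin n → ℝ) : u ⬝ᵥ u = eucNorm u ^ 2 := by
  rw [eucNorm, Real.sq_sqrt (by positivity)]
  simp [dotProduct, sq]

theorem norm_inv_norm_smul_sub_le {E : Type*} [NormedAddCommGroup E] [NormedSpace ℝ E]
    {w : E} (hw : ‖w‖ = 1) (v : E) : ‖‖v‖⁻¹ • v - w‖ ≤ 2 * ‖v - w‖ := by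
  have hrescale : ‖‖v‖⁻¹ • v - v‖ ≤ ‖v - w‖ := by
    rcases eq_or_ne v 0 with rfl | hv
    · simp
    calc ‖‖v‖⁻¹ • v - v‖ = ‖(1 - ‖v‖) • (‖v‖⁻¹ • v)‖ := by
          rw [sub_smul, one_smul, smul_smul, mul_inv_cancel₀ (norm_ne_zero_iff.2 hv), one_smul]
      _ = |‖w‖ - ‖v‖| := by
          rw [norm_smul, norm_smul, norm_inv, norm_norm, inv_mul_cancel₀ (norm_ne_zero_iff.2 hv),
            hw, mul_one, Real.norm_eq_abs]
      _ ≤ ‖v - w‖ := by rw [norm_sub_rev v w]; exact abs_norm_sub_norm_le w v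
  calc ‖‖v‖⁻¹ • v - w‖ = ‖(‖v‖⁻¹ • v - v) + (v - w)‖ := by rw [sub_add_sub_cancel]
    _ ≤ 2 * ‖v - w‖ := by linarith [norm_add_le (‖v‖⁻¹ • v - v) (v - w)]

lemma eucNorm_inv_smul_sub_le {w : Fin n → ℝ} (hw : eucNorm w = 1) (v : Fin n → ℝ) :
    eucNorm ((eucNorm v)⁻¹ • v - w) ≤ 2 * eucNorm (v - w) := by
  simp only [eucNorm_eq_norm_toLp, WithLp.toLp_sub, WithLp.toLp_smul] at hw ⊢
  exact norm_inv_norm_smul_sub_le hw _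

end EuclideanNorm

section Newton
variable {E F : Type*} [NormedAddCommGroup E] [NormedSpace ℝ E]
  [NormedAddCommGroup F] [NormedSpace ℝ F]

theorem norm_sub_sub_fderiv_le_of_lipschitzOnWith {f : E → F} {f' : E → E →L[ℝ] F}
    {x₀ x : E} {r : ℝ} {K : ℝ≥0} (hf : ∀ y ∈ ball x₀ r, HasFDerivAt f (f' y) y)
    (hf' : LipschitzOnWith K f' (ball x₀ r)) (hx : x ∈ ball x₀ r) :
    ‖f x₀ - f x - f' x (x₀ - x)‖ ≤ 2 * K * ‖x - x₀‖ ^ 2 := by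
  set s := closedBall x₀ ‖x - x₀‖
  have hs : s ⊆ ball x₀ r := closedBall_subset_ball (by rwa [mem_ball, dist_eq_norm] at hx)
  have hxs : x ∈ s := by rw [mem_closedBall, dist_eq_norm]
  have hbound : ∀ z ∈ s, ‖f' z - f' x‖ ≤ 2 * K * ‖x - x₀‖ := fun z hz => by
    have hzx : ‖z - x‖ ≤ 2 * ‖x - x₀‖ := by
      rw [mem_closedBall, dist_eq_norm] at hz
      linarith [norm_sub_le_norm_sub_add_norm_sub z x₀ x, norm_sub_rev x₀ x]
    calc ‖f' z - f' x‖ ≤ K * ‖z - x‖ := hf'.norm_sub_le (hs hz) (hs hxs)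
      _ ≤ 2 * K * ‖x - x₀‖ := by nlinarith [K.coe_nonneg]
  calc ‖f x₀ - f x - f' x (x₀ - x)‖ ≤ 2 * K * ‖x - x₀‖ * ‖x₀ - x‖ :=
        (convex_closedBall _ _).norm_image_sub_le_of_norm_hasFDerivWithin_le'
          (fun z hz => (hf z (hs hz)).hasFDerivWithinAt) hbound hxs
          (mem_closedBall_self (norm_nonneg _))
    _ = 2 * K * ‖x - x₀‖ ^ 2 := by rw [norm_sub_rev]; ring

theorem eventually_norm_newton_step_sub_le [FiniteDimensional ℝ E] {f : E → F} {x₀ : E}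
    (hf : ContDiff ℝ 2 f) (hx₀ : f x₀ = 0) (hinj : Function.Injective (fderiv ℝ f x₀)) :
    ∃ C > 0, ∀ᶠ x in 𝓝 x₀, ∀ y, fderiv ℝ f x (y - x) = -f x →
      ‖y - x₀‖ ≤ C * ‖x - x₀‖ ^ 2 := by
  set L := fderiv ℝ f x₀
  obtain ⟨M, hM, hML⟩ := (L : E →ₗ[ℝ] F).exists_antilipschitzWith (LinearMap.ker_eq_bot.2 hinj)
  obtain ⟨K, s, hs, hK⟩ :=
    ((hf.fderiv_right (m := 1) le_rfl).contDiffAt (x := x₀)).exists_lipschitzOnWith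
  obtain ⟨r, hr, hrs⟩ := Metric.mem_nhds_iff.1 hs
  have hK' : LipschitzOnWith (K + 1) (fderiv ℝ f) (ball x₀ r) :=
    (hK.mono hrs).weaken le_self_add
  have hderiv : ∀ y ∈ ball x₀ r, HasFDerivAt f (fderiv ℝ f y) y := fun y _ =>
    (hf.differentiable (by norm_num) y).hasFDerivAt
  have hsmall : ∀ᶠ x in 𝓝 x₀, M * (K + 1) * ‖x - x₀‖ < 1 / 2 := by
    refine Filter.Tendsto.eventually_lt_const (v := 0) (by norm_num) ?_
    exact ((continuous_id.sub continuous_const).norm.const_mul _).tendsto' x₀ 0 (by simp)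
  refine ⟨4 * M * (K + 1), by positivity, ?_⟩
  filter_upwards [ball_mem_nhds x₀ hr, hsmall] with x hx hxsmall y hy
  -- Newton's equation turns `f' x (y - x₀)` into the Taylor remainder at `x`.
  have hremainder : ‖fderiv ℝ f x (y - x₀)‖ ≤ 2 * (K + 1) * ‖x - x₀‖ ^ 2 := by
    have hid : fderiv ℝ f x (y - x₀) = f x₀ - f x - fderiv ℝ f x (x₀ - x) := by
      rw [← sub_add_sub_cancel y x x₀, map_add, hy, hx₀, ← neg_sub x₀ x, map_neg]
      abel
    rw [hid]
    exact_mod_cast norm_sub_sub_fderiv_le_of_lipschitzOnWith hderiv hK' hx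
  have hpert : ‖(fderiv ℝ f x - L) (y - x₀)‖ ≤ (K + 1) * ‖x - x₀‖ * ‖y - x₀‖ :=
    ((fderiv ℝ f x - L).le_opNorm _).trans (by
      gcongr
      simpa [dist_eq_norm] using hK'.dist_le_mul x hx x₀ (mem_ball_self hr))
  have hbound : ‖y - x₀‖ ≤ M * (2 * (K + 1) * ‖x - x₀‖ ^ 2 + (K + 1) * ‖x - x₀‖ * ‖y - x₀‖) := by
    calc ‖y - x₀‖ ≤ M * ‖L (y - x₀)‖ := L.bound_of_antilipschitz hML _
      _ ≤ _ := by
        gcongr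
        calc ‖L (y - x₀)‖ = ‖fderiv ℝ f x (y - x₀) - (fderiv ℝ f x - L) (y - x₀)‖ := by simp
          _ ≤ _ := (norm_sub_le _ _).trans (add_le_add hremainder hpert)
  nlinarith [norm_nonneg (y - x₀)]

end Newton

section ZMatrix
variable {n : ℕ} {B : Matrix (Fin n) (Fin n) ℝ} {x : Fin n → ℝ}

theorem IsZMatrix.nonneg_of_mulVec_nonneg (hB : IsZMatrix B) (hx : ∀ i, 0 < x i)
    (hBx : ∀ i, 0 < (B *ᵥ x) i) {v : Fin n → ℝ} (hv : 0 ≤ B *ᵥ v) : 0 ≤ v := by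
  by_contra hneg
  obtain ⟨j, hj⟩ : ∃ j, v j < 0 := by simpa [Pi.le_def] using hneg
  obtain ⟨i, -, hi⟩ := Finset.univ.exists_min_image (fun j => v j / x j) ⟨j, Finset.mem_univ j⟩
  set m := v i / x i
  have hm : m < 0 := (hi j (Finset.mem_univ j)).trans_lt (div_neg_of_neg_of_pos hj (hx j))
  -- `w := v - m • x` is nonnegative and vanishes at `i`, so `(B *ᵥ w) i ≤ 0` as `B` is a
  -- Z-matrix; but `(B *ᵥ w) i = (B *ᵥ v) i - m * (B *ᵥ x) i > 0` since `m < 0`.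
  have hw : ∀ k, 0 ≤ v k - m * x k := fun k => by
    have := hi k (Finset.mem_univ k)
    rw [le_div_iff₀ (hx k)] at this
    linarith
  have hwi : v i - m * x i = 0 := by simp [m, div_mul_cancel₀ _ (hx i).ne']
  have hBw : (B *ᵥ (v - m • x)) i ≤ 0 := by
    simp only [mulVec, dotProduct, Pi.sub_apply, Pi.smul_apply, smul_eq_mul]
    refine Finset.sum_nonpos fun k _ => ?_
    rcases eq_or_ne i k with rfl | hik
    · rw [hwi, mul_zero]
    · exact mul_nonpos_of_nonpos_of_nonneg (hB i k hik) (hw k)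
  have : 0 < (B *ᵥ (v - m • x)) i := by
    rw [mulVec_sub, mulVec_smul, Pi.sub_apply, Pi.smul_apply, smul_eq_mul]
    linarith [show (0 : ℝ) ≤ (B *ᵥ v) i from hv i, mul_neg_of_neg_of_pos hm (hBx i)]
  linarith

theorem IsZMatrix.eq_zero_of_mulVec_eq_smul [NeZero n] (hB : IsZMatrix B) (hx : ∀ i, 0 < x i)
    (hBx : ∀ i, 0 < (B *ᵥ x) i) {w : Fin n → ℝ} (hw : ∀ i, 0 < w i) {v : Fin n → ℝ} {δ : ℝ}
    (hv : B *ᵥ v = δ • w) (hwv : w ⬝ᵥ v = 0) : v = 0 ∧ δ = 0 := by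
  have of_nonneg : ∀ (v : Fin n → ℝ) (δ : ℝ), B *ᵥ v = δ • w → w ⬝ᵥ v = 0 → 0 ≤ δ → v = 0 := by
    intro v δ hv hwv hδ
    have hv0 : 0 ≤ v := hB.nonneg_of_mulVec_nonneg hx hBx
      (hv ▸ smul_nonneg hδ fun i => (hw i).le)
    funext i
    have := (Finset.sum_eq_zero_iff_of_nonneg fun j _ => mul_nonneg (hw j).le (hv0 j)).1 hwv i
      (Finset.mem_univ i)
    simpa [(hw i).ne'] using this
  have hv0 : v = 0 := by
    rcases le_total 0 δ with hδ | hδ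
    · exact of_nonneg v δ hv hwv hδ
    · refine neg_eq_zero.1 (of_nonneg (-v) (-δ) ?_ (by simp [hwv]) (neg_nonneg.2 hδ))
      rw [mulVec_neg, hv, neg_smul]
  refine ⟨hv0, ?_⟩
  have := congrFun hv 0
  simp only [hv0, mulVec_zero, Pi.zero_apply, Pi.smul_apply, smul_eq_mul] at this
  exact (mul_eq_zero.1 this.symm).resolve_right (hw 0).ne'

end ZMatrix

lemma hasDerivAt_div_add_sq {c : ℝ} (hc : 0 < c) (t : ℝ) :
    HasDerivAt (fun t : ℝ => t / (c + t ^ 2)) ((c - t ^ 2) / (c + t ^ 2) ^ 2) t := by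
  have hden : c + t ^ 2 ≠ 0 := by positivity
  refine ((hasDerivAt_id' t).div ((hasDerivAt_const t c).add (hasDerivAt_pow 2 t)) hden)
    |>.congr_deriv ?_
  norm_num
  ring

section ProblemLemmas
variable {n : ℕ} (A : Matrix (Fin n) (Fin n) ℝ) (Γ : ℝ) (a : Fin n → ℝ)

lemma calA_mulVec_apply (u v : Fin n → ℝ) (i : Fin n) :
    (calA A Γ a u *ᵥ v) i = (A *ᵥ v) i + Γ * v i - Γ * (v i / (a i + u i ^ 2)) := by
  simp only [calA, add_mulVec, smul_mulVec, mulVec_diagonal, Pi.add_apply, Pi.smul_apply,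
    smul_eq_mul]
  ring

lemma rvec_apply (u : Fin n → ℝ) (lam : ℝ) (i : Fin n) :
    rvec A Γ a u lam i = (A *ᵥ u) i + Γ * u i - Γ * (u i / (a i + u i ^ 2)) - lam * u i := by
  simp [rvec, calA_mulVec_apply]

lemma Jmat_mulVec_self_of_eig {u : Fin n → ℝ} {lam : ℝ} (ha : ∀ i, 0 < a i)
    (heig : calA A Γ a u *ᵥ u = lam • u) (i : Fin n) :
    (Jmat A Γ a u lam *ᵥ u) i = Γ * (2 * u i ^ 3 / (a i + u i ^ 2) ^ 2) := by
  have hr : rvec A Γ a u lam i = 0 := by simp [rvec, heig]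
  have hd : a i + u i ^ 2 ≠ 0 := by have := ha i; positivity
  rw [rvec_apply] at hr
  simp only [Jmat, sub_mulVec, add_mulVec, smul_mulVec, one_mulVec, mulVec_diagonal,
    Pi.sub_apply, Pi.add_apply, Pi.smul_apply, smul_eq_mul]
  field_simp at hr ⊢
  linear_combination (a i + u i ^ 2) * hr

lemma isZMatrix_Jmat (hA : IsZMatrix A) (u : Fin n → ℝ) (lam : ℝ) :
    IsZMatrix (Jmat A Γ a u lam) := fun i j hij => by
  simpa [Jmat, one_apply_ne hij, diagonal_apply_ne _ hij] using hA i j hij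

/-- On the unit sphere, `NewtonSystem` is Newton's equation for this map; off the sphere the
right-hand side of its constraint row has the opposite sign. -/
noncomputable def eigenResidual (p : (Fin n → ℝ) × ℝ) : (Fin n → ℝ) × ℝ :=
  (rvec A Γ a p.1 p.2, -(1 / 2 * (p.1 ⬝ᵥ p.1 - 1)))

noncomputable def borderedJacobian (u : Fin n → ℝ) (lam : ℝ) :
    ((Fin n → ℝ) × ℝ) →L[ℝ] (Fin n → ℝ) × ℝ :=
  LinearMap.toContinuousLinearMap
    { toFun := fun v => (Jmat A Γ a u lam *ᵥ v.1 - v.2 • u, -(u ⬝ᵥ v.1))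
      map_add' := fun v w => by
        ext <;> simp [mulVec_add, add_smul, dotProduct_add] <;> abel
      map_smul' := fun c v => by
        ext <;> simp [mulVec_smul, smul_sub, smul_smul] }

@[simp] lemma borderedJacobian_apply (u : Fin n → ℝ) (lam : ℝ) (v : (Fin n → ℝ) × ℝ) :
    borderedJacobian A Γ a u lam v = (Jmat A Γ a u lam *ᵥ v.1 - v.2 • u, -(u ⬝ᵥ v.1)) := rfl

lemma hasFDerivAt_eigenResidual (ha : ∀ i, 0 < a i) (p : (Fin n → ℝ) × ℝ) :
    HasFDerivAt (eigenResidual A Γ a) (borderedJacobian A Γ a p.1 p.2) p := by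
  have hu : ∀ i, HasFDerivAt (fun q : (Fin n → ℝ) × ℝ => q.1 i)
      ((ContinuousLinearMap.proj i).comp (ContinuousLinearMap.fst ℝ _ ℝ)) p := fun i =>
    (hasFDerivAt_apply (𝕜 := ℝ) i p.1).comp p hasFDerivAt_fst
  have hr : HasFDerivAt (fun q : (Fin n → ℝ) × ℝ => rvec A Γ a q.1 q.2)
      ((ContinuousLinearMap.fst ℝ _ _).comp (borderedJacobian A Γ a p.1 p.2)) p := by
    rw [hasFDerivAt_pi']
    intro i
    have hAu : HasFDerivAt (fun q : (Fin n → ℝ) × ℝ => (A *ᵥ q.1) i)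
        ((ContinuousLinearMap.proj i).comp ((LinearMap.toContinuousLinearMap (mulVecLin A)).comp
          (ContinuousLinearMap.fst ℝ _ ℝ))) p := by
      have hA := (LinearMap.toContinuousLinearMap (mulVecLin A)).hasFDerivAt (x := p.1)
      exact (hasFDerivAt_apply (𝕜 := ℝ) i _).comp p (hA.comp p hasFDerivAt_fst)
    have hφ := (hasDerivAt_div_add_sq (ha i) (p.1 i)).comp_hasFDerivAt p (hu i)
    convert ((hAu.add ((hu i).const_mul Γ)).sub (hφ.const_mul Γ)).sub
      (hasFDerivAt_snd.mul (hu i)) using 1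
    · funext q; exact rvec_apply A Γ a q.1 q.2 i
    · ext v
      · simp [Jmat, mulVec_diagonal, sub_mulVec, add_mulVec, smul_mulVec]
        ring
      · simp
  have hs : HasFDerivAt (fun q : (Fin n → ℝ) × ℝ => -(1 / 2 * (q.1 ⬝ᵥ q.1 - 1)))
      ((ContinuousLinearMap.snd ℝ _ _).comp (borderedJacobian A Γ a p.1 p.2)) p := by
    have hdot := HasFDerivAt.sum (u := Finset.univ) fun i _ => (hu i).mul (hu i)
    refine (((hdot.sub_const 1).const_mul (1 / 2)).neg.congr_fderiv ?_).congr_of_eventuallyEq ?_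
    · ext v <;> simp [dotProduct, ← two_mul, Finset.mul_sum]
    · exact Filter.Eventually.of_forall fun q => by simp [dotProduct]
  exact (hr.prodMk hs).congr_fderiv (by ext <;> rfl)

lemma contDiff_eigenResidual (ha : ∀ i, 0 < a i) : ContDiff ℝ 2 (eigenResidual A Γ a) := by
  have hden : ∀ (q : (Fin n → ℝ) × ℝ) i, a i + q.1 i ^ 2 ≠ 0 := fun q i => by
    have := ha i; positivity
  refine ContDiff.prodMk (contDiff_pi.2 fun i => ?_) ?_
  · simp only [rvec_apply, mulVec, dotProduct]
    fun_prop (disch := exact fun q => hden q i)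
  · simp only [dotProduct]
    fun_prop

lemma newtonSystem_iff {u : Fin n → ℝ} (hu : eucNorm u = 1) (lam : ℝ) (Δ : Fin n → ℝ) (δ : ℝ) :
    NewtonSystem A Γ a u lam Δ δ ↔
      borderedJacobian A Γ a u lam (Δ, δ) = -eigenResidual A Γ a (u, lam) := by
  simp [NewtonSystem, eigenResidual, Prod.ext_iff, dotProduct_self_eq_eucNorm_sq, hu]

lemma eigenResidual_eq_zero {u : Fin n → ℝ} {lam : ℝ} (heig : calA A Γ a u *ᵥ u = lam • u)
    (hu : eucNorm u = 1) : eigenResidual A Γ a (u, lam) = 0 := by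
  simp [eigenResidual, rvec, heig, dotProduct_self_eq_eucNorm_sq, hu]

lemma injective_borderedJacobian [NeZero n] (ha : ∀ i, 0 < a i) (hΓ : 0 < Γ) (hA : IsZMatrix A)
    {u : Fin n → ℝ} {lam : ℝ} (hu : ∀ i, 0 < u i) (heig : calA A Γ a u *ᵥ u = lam • u) :
    Function.Injective (borderedJacobian A Γ a u lam) := by
  refine (injective_iff_map_eq_zero _).2 fun ⟨Δ, δ⟩ h => ?_
  have hJu : ∀ i, 0 < (Jmat A Γ a u lam *ᵥ u) i := fun i => by
    rw [Jmat_mulVec_self_of_eig A Γ a ha heig]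
    have := ha i; have := hu i
    positivity
  simp only [borderedJacobian_apply, Prod.ext_iff, Prod.fst_zero, Prod.snd_zero, sub_eq_zero,
    neg_eq_zero] at h
  obtain ⟨rfl, rfl⟩ := (isZMatrix_Jmat A Γ a hA u lam).eq_zero_of_mulVec_eq_smul hu hJu hu h.1 h.2
  rfl

lemma exists_abs_lamOf_sub_le [NeZero n] (ha : ∀ i, 0 < a i) {u₀ : Fin n → ℝ} {lam₀ : ℝ}
    (hu₀ : ∀ i, 0 < u₀ i) (heig : calA A Γ a u₀ *ᵥ u₀ = lam₀ • u₀) :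
    ∃ K : ℝ≥0, ∃ r > 0, ∀ u, eucNorm (u - u₀) < r →
      |lamOf A Γ a u - lam₀| ≤ K * eucNorm (u - u₀) := by
  set ratio : (Fin n → ℝ) → Fin n → ℝ := fun u i => (calA A Γ a u *ᵥ u) i / u i
  have hratio : ContDiffAt ℝ 1 ratio u₀ := by
    refine contDiffAt_pi.2 fun i => ?_
    have := ha i
    simp only [ratio, calA_mulVec_apply]
    simp only [mulVec, dotProduct]
    fun_prop (disch := first | exact (hu₀ i).ne' | positivity)
  obtain ⟨K, s, hs, hK⟩ := hratio.exists_lipschitzOnWith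
  obtain ⟨r, hr, hrs⟩ := Metric.mem_nhds_iff.1 hs
  refine ⟨K, r, hr, fun u hu => ?_⟩
  have hue : ‖u - u₀‖ ≤ eucNorm (u - u₀) := norm_le_eucNorm _
  obtain ⟨i, hi⟩ := exists_eq_ciInf_of_finite (f := ratio u)
  have h₀ : ratio u₀ i = lam₀ := by simp [ratio, heig, (hu₀ i).ne']
  calc |lamOf A Γ a u - lam₀| = |(ratio u - ratio u₀) i| := by
        rw [lamOf, ← hi, Pi.sub_apply, h₀]
    _ ≤ ‖ratio u - ratio u₀‖ := by rw [← Real.norm_eq_abs]; exact norm_le_pi_norm _ i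
    _ ≤ K * ‖u - u₀‖ :=
        hK.norm_sub_le (hrs (by rw [mem_ball, dist_eq_norm]; linarith)) (mem_of_mem_nhds hs)
    _ ≤ K * eucNorm (u - u₀) := by gcongr

end ProblemLemmas

section Iterate
variable {n : ℕ}

lemma eventually_mul_sq_lt (k : ℝ) {r : ℝ} (hr : 0 < r) : ∀ᶠ ρ in 𝓝 (0 : ℝ), k * ρ ^ 2 < r :=
  (((continuous_pow 2).const_mul k).tendsto' 0 0 (by simp)).eventually_lt_const hr

lemma pos_of_norm_sub_lt {v w : Fin n → ℝ} {m : ℝ} (hw : ∀ i, m ≤ w i) (hvw : ‖v - w‖ < m)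
    (i : Fin n) : 0 < v i := by
  have := (abs_le.1 ((Real.norm_eq_abs _).symm.trans_le (norm_le_pi_norm (v - w) i))).1
  simp only [Pi.sub_apply] at this
  linarith [hw i]

lemma inv_eucNorm_smul_pos [NeZero n] {v : Fin n → ℝ} (hv : ∀ i, 0 < v i) (i : Fin n) :
    0 < ((eucNorm v)⁻¹ • v) i :=
  mul_pos (inv_pos.2 (eucNorm_pos fun h => (hv 0).ne' (congrFun h 0))) (hv i)

variable (A : Matrix (Fin n) (Fin n) ℝ) (Γ : ℝ) (a : Fin n → ℝ)

lemma eventually_norm_newton_iterate_sub_le [NeZero n] (ha : ∀ i, 0 < a i) (hΓ : 0 < Γ)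
    (hA : IsZMatrix A) {u₀ : Fin n → ℝ} {lam₀ : ℝ} (hu₀ : ∀ i, 0 < u₀ i)
    (hnorm : eucNorm u₀ = 1) (heig : calA A Γ a u₀ *ᵥ u₀ = lam₀ • u₀) :
    ∃ C > 0, ∀ᶠ x : (Fin n → ℝ) × ℝ in 𝓝 (u₀, lam₀), ∀ Δ δ, eucNorm x.1 = 1 →
      NewtonSystem A Γ a x.1 x.2 Δ δ → ‖x.1 + Δ - u₀‖ ≤ C * ‖x - (u₀, lam₀)‖ ^ 2 := by
  have hfderiv : ∀ p, fderiv ℝ (eigenResidual A Γ a) p = borderedJacobian A Γ a p.1 p.2 :=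
    fun p => (hasFDerivAt_eigenResidual A Γ a ha p).fderiv
  obtain ⟨C, hC, hnewton⟩ := eventually_norm_newton_step_sub_le (contDiff_eigenResidual A Γ a ha)
    (eigenResidual_eq_zero A Γ a heig hnorm)
    (by rw [hfderiv]; exact injective_borderedJacobian A Γ a ha hΓ hA hu₀ heig)
  refine ⟨C, hC, hnewton.mono fun x hx Δ δ hxnorm hN =>
    (norm_fst_le ((x.1 + Δ, x.2 + δ) - (u₀, lam₀))).trans (hx (x.1 + Δ, x.2 + δ) ?_)⟩
  rw [hfderiv, show (x.1 + Δ, x.2 + δ) - x = (Δ, δ) by ext <;> simp]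
  exact (newtonSystem_iff A Γ a hxnorm x.2 Δ δ).1 hN

lemma exists_normalized_newton_step_pos_and_sub_le [NeZero n] (ha : ∀ i, 0 < a i) (hΓ : 0 < Γ)
    (hA : IsZMatrix A) {u₀ : Fin n → ℝ} {lam₀ : ℝ} (hu₀ : ∀ i, 0 < u₀ i)
    (hnorm : eucNorm u₀ = 1) (heig : calA A Γ a u₀ *ᵥ u₀ = lam₀ • u₀) :
    ∃ c > 0, ∃ r > 0, ∀ u lam Δ δ, eucNorm u = 1 → NewtonSystem A Γ a u lam Δ δ →
      eucNorm (u - u₀) + |lam - lam₀| < r →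
      (∀ i, 0 < ((eucNorm (u + Δ))⁻¹ • (u + Δ)) i) ∧
      eucNorm ((eucNorm (u + Δ))⁻¹ • (u + Δ) - u₀) ≤ c * (eucNorm (u - u₀) + |lam - lam₀|) ^ 2 := by
  obtain ⟨C, hC, hnewton⟩ := eventually_norm_newton_iterate_sub_le A Γ a ha hΓ hA hu₀ hnorm heig
  obtain ⟨r₁, hr₁, hnewton⟩ := Metric.eventually_nhds_iff.1 hnewton
  obtain ⟨i₀, -, hi₀⟩ := Finset.univ.exists_min_image u₀ Finset.univ_nonempty
  obtain ⟨r, hr, hsmall⟩ := Metric.eventually_nhds_iff.1 <|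
    (gt_mem_nhds hr₁).and (eventually_mul_sq_lt C (hu₀ i₀))
  have hn : (0 : ℝ) < n := by exact_mod_cast Nat.pos_of_ne_zero (NeZero.ne n)
  refine ⟨2 * √n * C, by positivity, r, hr, fun u lam Δ δ hu hN hρ => ?_⟩
  set ρ := eucNorm (u - u₀) + |lam - lam₀|
  have hρ0 : 0 ≤ ρ := add_nonneg (eucNorm_nonneg _) (abs_nonneg _)
  obtain ⟨hρr₁, hρm⟩ := hsmall (by rwa [Real.dist_eq, sub_zero, abs_of_nonneg hρ0])
  have hdist : dist (u, lam) (u₀, lam₀) ≤ ρ := by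
    rw [dist_eq_norm, norm_prod_le_iff]
    exact ⟨(norm_le_eucNorm _).trans (le_add_of_nonneg_right (abs_nonneg _)),
      le_add_of_nonneg_left (eucNorm_nonneg _)⟩
  have hstep : ‖u + Δ - u₀‖ ≤ C * ρ ^ 2 :=
    (hnewton (hdist.trans_lt hρr₁) Δ δ hu hN).trans (by rw [← dist_eq_norm]; gcongr)
  refine ⟨inv_eucNorm_smul_pos (pos_of_norm_sub_lt (fun i => hi₀ i (Finset.mem_univ i))
    (hstep.trans_lt hρm)), ?_⟩
  calc _ ≤ 2 * eucNorm (u + Δ - u₀) := eucNorm_inv_smul_sub_le hnorm (u + Δ)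
    _ ≤ 2 * (√n * ‖u + Δ - u₀‖) := by gcongr; exact eucNorm_le_sqrt_mul_norm _
    _ ≤ 2 * √n * C * ρ ^ 2 := by nlinarith [Real.sqrt_nonneg n]

end Iterate

theorem stmt_19_general {n : ℕ} [NeZero n] (A : Matrix (Fin n) (Fin n) ℝ) (a : Fin n → ℝ) (Γ : ℝ)
    (ha : ∀ i, 0 < a i) (hΓ : 0 < Γ)
    (hA : IsNonsingularM A)
    (ustar : Fin n → ℝ) (lamstar : ℝ)
    (hustar : ∀ i, 0 < ustar i) (hnormstar : eucNorm ustar = 1)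
    (heig : calA A Γ a ustar *ᵥ ustar = lamstar • ustar) :
    ∃ (ε : ℝ) (d : ℝ), 0 < ε ∧ 0 < d ∧
      ∀ u : Fin n → ℝ, (∀ i, 0 < u i) → eucNorm u = 1 →
        eucNorm (u - ustar) + |lamOf A Γ a u - lamstar| < ε →
        ∀ (Δ : Fin n → ℝ) (δ : ℝ),
          NewtonSystem A Γ a u (lamOf A Γ a u) Δ δ →
          (∀ i, 0 < ((eucNorm (u + Δ))⁻¹ • (u + Δ)) i) ∧
          eucNorm ((eucNorm (u + Δ))⁻¹ • (u + Δ) - ustar) ≤ d * eucNorm (u - ustar) ^ 2 ∧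
          eucNorm ((eucNorm (u + Δ))⁻¹ • (u + Δ) - ustar)
              + |lamOf A Γ a ((eucNorm (u + Δ))⁻¹ • (u + Δ)) - lamstar| ≤
            d * (eucNorm (u - ustar) + |lamOf A Γ a u - lamstar|) ^ 2 := by
  obtain ⟨c, hc, r₁, hr₁, hstep⟩ :=
    exists_normalized_newton_step_pos_and_sub_le A Γ a ha hΓ hA.1 hustar hnormstar heig
  obtain ⟨K, r₂, hr₂, hlam⟩ := exists_abs_lamOf_sub_le A Γ a ha hustar heig
  obtain ⟨ε, hε, hsmall⟩ := Metric.eventually_nhds_iff.1 <|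
    (gt_mem_nhds hr₁).and <| (gt_mem_nhds hr₂).and <| eventually_mul_sq_lt c hr₂
  refine ⟨ε, c * (1 + K) ^ 2, hε, by positivity, fun u _ hu hρ Δ δ hN => ?_⟩
  set ρ := eucNorm (u - ustar) + |lamOf A Γ a u - lamstar|
  set u' := (eucNorm (u + Δ))⁻¹ • (u + Δ)
  have hρ0 : 0 ≤ ρ := add_nonneg (eucNorm_nonneg _) (abs_nonneg _)
  obtain ⟨hρr₁, hρr₂, hρc⟩ := hsmall (by rwa [Real.dist_eq, sub_zero, abs_of_nonneg hρ0])
  obtain ⟨hpos, hu'⟩ := hstep u _ Δ δ hu hN hρr₁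
  have hρu : ρ ≤ (1 + K) * eucNorm (u - ustar) := by
    linarith [hlam u (by linarith [abs_nonneg (lamOf A Γ a u - lamstar)])]
  have hlam' := hlam u' (by linarith)
  refine ⟨hpos, ?_, ?_⟩
  · calc eucNorm (u' - ustar) ≤ c * ρ ^ 2 := hu'
      _ ≤ c * ((1 + K) * eucNorm (u - ustar)) ^ 2 := by gcongr
      _ = _ := by ring
  · calc _ ≤ (1 + K) * eucNorm (u' - ustar) := by linarith
      _ ≤ (1 + K) * (c * ρ ^ 2) := by gcongr
      _ ≤ (1 + K) ^ 2 * (c * ρ ^ 2) := by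
        gcongr; exact le_self_pow₀ (le_add_of_nonneg_right K.coe_nonneg) two_ne_zero
      _ = _ := by ring

theorem stmt_19 {n : ℕ} [NeZero n] (A : Matrix (Fin n) (Fin n) ℝ) (a : Fin n → ℝ) (Γ : ℝ)
    (ha : ∀ i, 0 < a i) (hΓ : 0 < Γ)
    (hA : IsNonsingularM A) (hAirr : IsIrreducibleMat A)
    (ustar : Fin n → ℝ) (lamstar : ℝ)
    (hustar : ∀ i, 0 < ustar i) (hnormstar : eucNorm ustar = 1)
    (heig : calA A Γ a ustar *ᵥ ustar = lamstar • ustar) :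
    ∃ (ε : ℝ) (d : ℝ), 0 < ε ∧ 0 < d ∧
      ∀ u : Fin n → ℝ, (∀ i, 0 < u i) → eucNorm u = 1 →
        eucNorm (u - ustar) + |lamOf A Γ a u - lamstar| < ε →
        ∀ (Δ : Fin n → ℝ) (δ : ℝ),
          NewtonSystem A Γ a u (lamOf A Γ a u) Δ δ →
          (∀ i, 0 < ((eucNorm (u + Δ))⁻¹ • (u + Δ)) i) ∧
          eucNorm ((eucNorm (u + Δ))⁻¹ • (u + Δ) - ustar) ≤ d * eucNorm (u - ustar) ^ 2 ∧
          eucNorm ((eucNorm (u + Δ))⁻¹ • (u + Δ) - ustar)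
              + |lamOf A Γ a ((eucNorm (u + Δ))⁻¹ • (u + Δ)) - lamstar| ≤
            d * (eucNorm (u - ustar) + |lamOf A Γ a u - lamstar|) ^ 2 :=
  stmt_19_general A a Γ ha hΓ hA ustar lamstar hustar hnormstar heig
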